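/- arXiv:1503.01041 — 2 statements merged into one kernel-verified Lean document; each statement's English description precedes it below -/
import Mathlib

section
/- Let f be holomorphic in a neighborhood of z0 = 1 with f'(1) ≠ 0, and suppose there exist c ∈ ℂ and ρ > 0 such that (f(x) - c)·conj(f(1/x) - c) = ρ² for all real x in an interval (1-ε, 1+ε). Then 1/ρ = ±(1/|f'(1)|)·Re(1 + f''(1)/f'(1)), i.e. |Re(1 + f''(1)/f'(1))| / |f'(1)| = 1/|f(1) - c|. -/
open Complex ComplexConjugate Filter Topology

/-!
For real `x` the second factor is the conjugate of the holomorphic function `z ↦ f (1/z) - c`, so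
the constant product can be differentiated twice along the real axis. With `A = f 1 - c`,
`B = f' 1`, `C = f'' 1` this gives that `B * conj A` is real and
`Re (C * conj A) + Re (A * conj B) = ‖B‖ ^ 2`. Writing `C * conj A = (C / B) * (B * conj A)`
turns the second relation into `Re (1 + C / B) * (B * conj A) = ‖B‖ ^ 2`, and
`|B * conj A| = ‖B‖ * ‖A‖`.
-/

section Inversion

variable {𝕜 : Type*} [NontriviallyNormedField 𝕜] {h : 𝕜 → 𝕜} {h' z : 𝕜}

theorem hasDerivAt_comp_inv (hz : z ≠ 0) (hh : HasDerivAt h h' z⁻¹) :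
    HasDerivAt (fun w => h w⁻¹) (-h' / z ^ 2) z :=
  (hh.comp z (hasDerivAt_inv hz)).congr_deriv (by ring)

theorem deriv_comp_inv (hz : z ≠ 0) (hh : DifferentiableAt 𝕜 h z⁻¹) :
    deriv (fun w => h w⁻¹) z = -deriv h z⁻¹ / z ^ 2 :=
  (hasDerivAt_comp_inv hz hh.hasDerivAt).deriv

theorem deriv_deriv_comp_inv [CompleteSpace 𝕜] (hz : z ≠ 0) (hh : AnalyticAt 𝕜 h z⁻¹) :
    deriv (deriv fun w => h w⁻¹) z = deriv (deriv h) z⁻¹ / z ^ 4 + 2 * deriv h z⁻¹ / z ^ 3 := by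
  have hderiv : deriv (fun w => h w⁻¹) =ᶠ[𝓝 z] fun w => -deriv h w⁻¹ / w ^ 2 := by
    filter_upwards [(tendsto_inv₀ hz).eventually hh.eventually_analyticAt,
      eventually_ne_nhds hz] with w hw hw0
    exact deriv_comp_inv hw0 hw.differentiableAt
  have hd2 := (hasDerivAt_comp_inv hz hh.deriv.differentiableAt.hasDerivAt).neg.div
    (hasDerivAt_pow 2 z) (pow_ne_zero 2 hz)
  rw [hderiv.deriv_eq]
  refine hd2.deriv.trans ?_
  simp only [Pi.neg_apply]
  field_simp
  ring

end Inversion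

theorem eventuallyEq_zero_of_hasDerivAt_of_eventuallyEq_const {𝕜 E : Type*}
    [NontriviallyNormedField 𝕜] [NormedAddCommGroup E] [NormedSpace 𝕜 E]
    {φ ψ : 𝕜 → E} {a : 𝕜} {k : E} (hφ : φ =ᶠ[𝓝 a] fun _ => k)
    (hψ : ∀ᶠ x in 𝓝 a, HasDerivAt φ (ψ x) x) : ψ =ᶠ[𝓝 a] 0 := by
  filter_upwards [hφ.eventually_nhds, hψ] with x hφx hψx
  exact hψx.unique ((hasDerivAt_const x k).congr_of_eventuallyEq hφx)

section MulConj

variable {F G : ℂ → ℂ} {a : ℝ}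

theorem hasDerivAt_ofReal_mul_conj {F' G' : ℂ} (hF : HasDerivAt F F' a)
    (hG : HasDerivAt G G' a) :
    HasDerivAt (fun x : ℝ => F x * conj (G x)) (F' * conj (G a) + F a * conj G') a :=
  hF.comp_ofReal.mul hG.comp_ofReal.star

theorem deriv_mul_conj_eventuallyEq_zero (hF : AnalyticAt ℂ F a) (hG : AnalyticAt ℂ G a) {k : ℂ}
    (hconst : (fun x : ℝ => F x * conj (G x)) =ᶠ[𝓝 a] fun _ => k) :
    (fun x : ℝ => deriv F x * conj (G x) + F x * conj (deriv G x)) =ᶠ[𝓝 a] 0 := by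
  refine eventuallyEq_zero_of_hasDerivAt_of_eventuallyEq_const hconst ?_
  have hreal : Tendsto (fun x : ℝ => (x : ℂ)) (𝓝 a) (𝓝 a) :=
    continuous_ofReal.continuousAt
  filter_upwards [hreal.eventually (hF.eventually_analyticAt.and hG.eventually_analyticAt)]
    with x ⟨hFx, hGx⟩
  exact hasDerivAt_ofReal_mul_conj hFx.differentiableAt.hasDerivAt
    hGx.differentiableAt.hasDerivAt

theorem deriv_mul_conj_add_eq_zero (hF : AnalyticAt ℂ F a) (hG : AnalyticAt ℂ G a) {k : ℂ}
    (hconst : (fun x : ℝ => F x * conj (G x)) =ᶠ[𝓝 a] fun _ => k) :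
    deriv F a * conj (G a) + F a * conj (deriv G a) = 0 :=
  (deriv_mul_conj_eventuallyEq_zero hF hG hconst).self_of_nhds

theorem deriv_deriv_mul_conj_add_eq_zero (hF : AnalyticAt ℂ F a) (hG : AnalyticAt ℂ G a) {k : ℂ}
    (hconst : (fun x : ℝ => F x * conj (G x)) =ᶠ[𝓝 a] fun _ => k) :
    deriv (deriv F) a * conj (G a) + 2 * (deriv F a * conj (deriv G a))
      + F a * conj (deriv (deriv G) a) = 0 := by
  have hF' := hF.differentiableAt.hasDerivAt
  have hG' := hG.differentiableAt.hasDerivAt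
  have hψ := (hasDerivAt_ofReal_mul_conj hF.deriv.differentiableAt.hasDerivAt hG').add
    (hasDerivAt_ofReal_mul_conj hF' hG.deriv.differentiableAt.hasDerivAt)
  have hψ0 : HasDerivAt (fun x : ℝ => deriv F x * conj (G x) + F x * conj (deriv G x)) 0 a :=
    (hasDerivAt_const (a : ℝ) (0 : ℂ)).congr_of_eventuallyEq
      (deriv_mul_conj_eventuallyEq_zero hF hG hconst)
  rw [← hψ.unique hψ0]
  ring

end MulConj

theorem abs_re_one_add_div_div_norm {A B C : ℂ} (hA : A ≠ 0) (hB : B ≠ 0)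
    (h1 : B * conj A - A * conj B = 0)
    (h2 : C * conj A + A * conj C + 2 * (A * conj B) - 2 * (B * conj B) = 0) :
    |(1 + C / B).re| / ‖B‖ = 1 / ‖A‖ := by
  obtain ⟨τ, hτ⟩ : ∃ τ : ℝ, B * conj A = τ :=
    ⟨_, (conj_eq_iff_re.mp (by rw [map_mul, conj_conj]; linear_combination -h1)).symm⟩
  have hτ' : A * conj B = τ := by rw [← conj_ofReal, ← hτ, map_mul, conj_conj, mul_comm]
  have hCA : C * conj A = C / B * τ := by rw [← hτ]; field_simp
  have hAC : A * conj C = conj (C / B) * τ := by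
    rw [← conj_ofReal, ← map_mul, ← hCA, map_mul, conj_conj, mul_comm]
  have hre : (1 + C / B).re * τ = ‖B‖ ^ 2 := by
    have := congrArg re h2
    rw [hCA, hAC, hτ', mul_conj, normSq_eq_norm_sq] at this
    simp only [add_re, sub_re, mul_re, ofReal_re, ofReal_im, conj_re, conj_im, re_ofNat,
      im_ofNat, zero_re, mul_zero, sub_zero] at this
    rw [add_re, one_re]
    linear_combination this / 2
  have hτabs : |τ| = ‖B‖ * ‖A‖ := by
    rw [← Real.norm_eq_abs, ← norm_real, ← hτ, norm_mul, norm_conj]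
  rw [div_eq_div_iff (norm_ne_zero_iff.mpr hB) (norm_ne_zero_iff.mpr hA)]
  calc |(1 + C / B).re| * ‖A‖ = |(1 + C / B).re * τ| / ‖B‖ := by
        rw [abs_mul, hτabs]; field_simp
    _ = 1 * ‖B‖ := by rw [hre, abs_of_nonneg (by positivity)]; field_simp

theorem stmt5 (f : ℂ → ℂ) (c : ℂ) (ρ ε : ℝ) (hρ : 0 < ρ) (hε : 0 < ε)
    (hf : AnalyticAt ℂ f 1) (hf' : deriv f 1 ≠ 0)
    (hrefl : ∀ x : ℝ, |x - 1| < ε →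
      (f (x : ℂ) - c) * conj (f (1 / (x : ℂ)) - c) = (ρ : ℂ) ^ 2) :
    |(1 + deriv (deriv f) 1 / deriv f 1).re| / ‖deriv f 1‖
      = 1 / ‖f 1 - c‖ := by
  set g : ℂ → ℂ := fun z => f z - c
  have hg : AnalyticAt ℂ g 1 := hf.sub analyticAt_const
  have hg' : deriv g = deriv f := funext fun z => deriv_sub_const c
  have hconst : (fun x : ℝ => g x * conj (g (x : ℂ)⁻¹)) =ᶠ[𝓝 1] fun _ => (ρ : ℂ) ^ 2 := by
    filter_upwards [Metric.ball_mem_nhds 1 hε] with x hx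
    simpa [g, one_div] using hrefl x hx
  have hg0 : g 1 ≠ 0 := by
    intro h0
    have h := hconst.self_of_nhds
    simp only [ofReal_one, inv_one, h0, zero_mul] at h
    exact pow_ne_zero 2 (ofReal_ne_zero.mpr hρ.ne') h.symm
  have hginv : AnalyticAt ℂ (fun z => g z⁻¹) ((1 : ℝ) : ℂ) := by
    rw [ofReal_one]
    exact hg.comp_of_eq (analyticAt_inv one_ne_zero) inv_one
  have hg1 : AnalyticAt ℂ g ((1 : ℝ) : ℂ) := by simpa using hg
  have h1 := deriv_mul_conj_add_eq_zero hg1 hginv hconst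
  have h2 := deriv_deriv_mul_conj_add_eq_zero hg1 hginv hconst
  simp only [ofReal_one, inv_one] at h1 h2
  rw [deriv_comp_inv one_ne_zero (by simpa using hg.differentiableAt)] at h1 h2
  rw [deriv_deriv_comp_inv one_ne_zero (by simpa using hg)] at h2
  simp only [hg', inv_one, one_pow, div_one, map_neg, map_add, map_mul, map_ofNat] at h1 h2
  exact abs_re_one_add_div_div_norm hg0 hf' (by linear_combination h1)
    (by linear_combination h2)
end

section
/- Let n ≥ 2 and P_n(z) = z^n. Suppose f is holomorphic with nonvanishing derivative near z0^n ≠ 0 and f_n is holomorphic with nonvanishing derivative near z0 ≠ 0, f_n nonvanishing, and f_n(z)^n = f(z^n) near z0. Then ((1 - n²)/2)·(f_n'(z)/f_n(z))² + S_{f_n}(z) = S_f(z^n)·n²·z^{2(n-1)} + ((1 - n²)/2)·z^{-2}. -/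
/-!
Apply the Schwarzian chain rule `S_{g ∘ h} = (S_g ∘ h) · h'² + S_h` to both sides of
`P_n ∘ f_n = f ∘ P_n` and insert `S_{P_n}(w) = (1 - n²) / (2 w²)`. The chain rule comes from the
corresponding rule `(g ∘ h)''/(g ∘ h)' = (g''/g' ∘ h) · h' + h''/h'` for pre-Schwarzians: the
cross terms produced by squaring cancel against the derivative of `h''/h'`.
-/

open Filter

/-- The Schwarzian derivative `S_f = (f''/f')' - (1/2)(f''/f')²`. -/
noncomputable def schwarzian (f : ℂ → ℂ) (z : ℂ) : ℂ :=
  deriv (fun w => deriv (deriv f) w / deriv f w) z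
    - (1 / 2) * (deriv (deriv f) z / deriv f z) ^ 2

open Topology

noncomputable def preSchwarzian (f : ℂ → ℂ) (z : ℂ) : ℂ :=
  deriv (deriv f) z / deriv f z

theorem schwarzian_eq_deriv_preSchwarzian (f : ℂ → ℂ) (z : ℂ) :
    schwarzian f z = deriv (preSchwarzian f) z - 1 / 2 * preSchwarzian f z ^ 2 :=
  rfl

theorem Filter.EventuallyEq.schwarzian_eq {f g : ℂ → ℂ} {z : ℂ} (hfg : f =ᶠ[𝓝 z] g) :
    schwarzian f z = schwarzian g z := by
  have h1 : deriv f =ᶠ[𝓝 z] deriv g := hfg.deriv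
  have h2 : preSchwarzian f =ᶠ[𝓝 z] preSchwarzian g := h1.deriv.div h1
  rw [schwarzian_eq_deriv_preSchwarzian, schwarzian_eq_deriv_preSchwarzian, h2.deriv_eq,
    h2.self_of_nhds]

theorem AnalyticAt.preSchwarzian {f : ℂ → ℂ} {z : ℂ} (hf : AnalyticAt ℂ f z)
    (hf' : deriv f z ≠ 0) : AnalyticAt ℂ (preSchwarzian f) z :=
  hf.deriv.deriv.div hf.deriv hf'

theorem preSchwarzian_comp_eventuallyEq {g h : ℂ → ℂ} {z : ℂ} (hg : AnalyticAt ℂ g (h z))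
    (hg' : deriv g (h z) ≠ 0) (hh : AnalyticAt ℂ h z) :
    preSchwarzian (g ∘ h) =ᶠ[𝓝 z]
      fun w => preSchwarzian g (h w) * deriv h w + preSchwarzian h w := by
  have hh_tendsto : Tendsto h (𝓝 z) (𝓝 (h z)) := hh.continuousAt
  have ev_g : ∀ᶠ w in 𝓝 z, AnalyticAt ℂ g (h w) :=
    hh_tendsto.eventually hg.eventually_analyticAt
  have ev_g' : ∀ᶠ w in 𝓝 z, deriv g (h w) ≠ 0 :=
    hh_tendsto.eventually (hg.deriv.continuousAt.eventually_ne hg')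
  have first : deriv (g ∘ h) =ᶠ[𝓝 z] fun w => deriv g (h w) * deriv h w := by
    filter_upwards [ev_g, hh.eventually_analyticAt] with w hgw hhw
    exact deriv_comp w hgw.differentiableAt hhw.differentiableAt
  have second : deriv (deriv (g ∘ h)) =ᶠ[𝓝 z]
      fun w => deriv (deriv g) (h w) * deriv h w ^ 2 + deriv g (h w) * deriv (deriv h) w := by
    filter_upwards [first.deriv, ev_g, hh.eventually_analyticAt] with w hw hgw hhw
    have hg'w : DifferentiableAt ℂ (fun v => deriv g (h v)) w :=
      hgw.deriv.differentiableAt.comp w hhw.differentiableAt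
    rw [hw, deriv_fun_mul hg'w hhw.deriv.differentiableAt,
      ← Function.comp_def, deriv_comp w hgw.deriv.differentiableAt hhw.differentiableAt]
    ring
  filter_upwards [first, second, ev_g'] with w h1 h2 hgw
  simp only [preSchwarzian, h1, h2]
  by_cases hhw : deriv h w = 0
  · simp [hhw]
  · field_simp

theorem schwarzian_comp {g h : ℂ → ℂ} {z : ℂ} (hg : AnalyticAt ℂ g (h z))
    (hg' : deriv g (h z) ≠ 0) (hh : AnalyticAt ℂ h z) (hh' : deriv h z ≠ 0) :
    schwarzian (g ∘ h) z = schwarzian g (h z) * deriv h z ^ 2 + schwarzian h z := by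
  have hPg : DifferentiableAt ℂ (fun w => preSchwarzian g (h w)) z :=
    (hg.preSchwarzian hg').differentiableAt.comp z hh.differentiableAt
  have hPh : DifferentiableAt ℂ (preSchwarzian h) z := (hh.preSchwarzian hh').differentiableAt
  have hP := preSchwarzian_comp_eventuallyEq hg hg' hh
  have hderiv : deriv (preSchwarzian (g ∘ h)) z = deriv (preSchwarzian g) (h z) * deriv h z ^ 2
      + preSchwarzian g (h z) * deriv (deriv h) z + deriv (preSchwarzian h) z := by
    rw [hP.deriv_eq, deriv_fun_add (hPg.fun_mul hh.deriv.differentiableAt) hPh,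
      deriv_fun_mul hPg hh.deriv.differentiableAt, ← Function.comp_def,
      deriv_comp z (hg.preSchwarzian hg').differentiableAt hh.differentiableAt]
    ring
  simp only [schwarzian_eq_deriv_preSchwarzian, hderiv, hP.self_of_nhds]
  simp only [preSchwarzian]
  field_simp
  ring

theorem preSchwarzian_pow {n : ℕ} (hn : n ≠ 0) {z : ℂ} (hz : z ≠ 0) :
    preSchwarzian (· ^ n) z = (n - 1) / z := by
  have hderiv : deriv (· ^ n) = fun w : ℂ => n * w ^ (n - 1) := funext fun w => deriv_pow_field n
  simp only [preSchwarzian, hderiv, deriv_const_mul_field', deriv_pow_field]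
  obtain _ | _ | k := n
  · contradiction
  · simp
  · simp only [Nat.add_sub_cancel, pow_succ]
    have hk : (k : ℂ) + 1 + 1 ≠ 0 := by norm_cast
    push_cast
    field_simp
    ring

theorem schwarzian_pow {n : ℕ} (hn : n ≠ 0) {z : ℂ} (hz : z ≠ 0) :
    schwarzian (· ^ n) z = (1 - n ^ 2) / 2 / z ^ 2 := by
  have hP : preSchwarzian (· ^ n) =ᶠ[𝓝 z] fun w => (n - 1) / w := by
    filter_upwards [eventually_ne_nhds hz] with w hw using preSchwarzian_pow hn hw
  rw [schwarzian_eq_deriv_preSchwarzian, hP.deriv_eq, hP.self_of_nhds, deriv_const_div_id]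
  field_simp
  ring

theorem stmt14 (n : ℕ) (hn : 2 ≤ n) (z0 : ℂ) (hz0 : z0 ≠ 0) (f fn : ℂ → ℂ)
    (hf : AnalyticAt ℂ f (z0 ^ n))
    (hf' : ∀ᶠ w in nhds (z0 ^ n), deriv f w ≠ 0)
    (hfn : AnalyticAt ℂ fn z0)
    (hfn' : ∀ᶠ z in nhds z0, deriv fn z ≠ 0)
    (hfnz : ∀ᶠ z in nhds z0, fn z ≠ 0)
    (hcomp : ∀ᶠ z in nhds z0, fn z ^ n = f (z ^ n)) :
    ((1 - (n : ℂ) ^ 2) / 2) * (deriv fn z0 / fn z0) ^ 2 + schwarzian fn z0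
      = schwarzian f (z0 ^ n) * (n : ℂ) ^ 2 * z0 ^ (2 * (n - 1))
        + ((1 - (n : ℂ) ^ 2) / 2) / z0 ^ 2 := by
  have hn0 : n ≠ 0 := by omega
  have hfnz0 : fn z0 ≠ 0 := hfnz.self_of_nhds
  have hpow_analytic : ∀ w : ℂ, AnalyticAt ℂ (· ^ n) w := fun w => by fun_prop
  have hpow_deriv_ne : ∀ w : ℂ, w ≠ 0 → deriv (· ^ n) w ≠ 0 := fun w hw => by
    rw [deriv_pow_field]
    exact mul_ne_zero (Nat.cast_ne_zero.mpr hn0) (pow_ne_zero _ hw)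
  have key : schwarzian ((· ^ n) ∘ fn) z0 = schwarzian (f ∘ (· ^ n)) z0 :=
    Filter.EventuallyEq.schwarzian_eq hcomp
  rw [schwarzian_comp (hpow_analytic _) (hpow_deriv_ne _ hfnz0) hfn hfn'.self_of_nhds,
    schwarzian_comp (h := (· ^ n)) hf hf'.self_of_nhds (hpow_analytic _) (hpow_deriv_ne _ hz0),
    schwarzian_pow hn0 hfnz0, schwarzian_pow hn0 hz0, deriv_pow_field] at key
  rw [mul_pow, ← pow_mul, mul_comm (n - 1)] at key
  linear_combination key
end
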